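/- arXiv:2108.08892 — 5 statements merged into one kernel-verified Lean document; each statement's English description precedes it below -/
import Mathlib

section
/- If 0 → A → B → C → 0 is a short exact sequence of finitely generated abelian groups and A is finite, then |tor B| = |A| · |tor C|. -/
/-!
Since `A` is finite, `ker j = i(A)` lies in `tor B`, and an element of `B` whose image under `j`
is torsion has a multiple in `ker j`, hence is torsion itself. So `j` restricts to a surjection
`tor B → tor C` with kernel `i(A) ≅ A`, and the cardinalities multiply.
-/

namespace CommGroup

variable {G H : Type*} [CommGroup G] [CommGroup H]

@[to_additive]
lemma range_le_torsion_of_finite {K : Type*} [Group K] [Finite K] (f : K →* G) :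
    f.range ≤ torsion G := by
  rintro _ ⟨x, rfl⟩
  exact f.isOfFinOrder (isOfFinOrder_of_finite x)

@[to_additive]
lemma map_torsion_of_surjective {f : G →* H} (hf : Function.Surjective f)
    (hker : f.ker ≤ torsion G) : (torsion G).map f = torsion H := by
  refine le_antisymm (map_torsion_le f) fun y hy => ?_
  obtain ⟨n, hn, hyn⟩ := isOfFinOrder_iff_pow_eq_one.1 hy
  obtain ⟨x, rfl⟩ := hf y
  have hxn : x ^ n ∈ torsion G := hker (by rwa [MonoidHom.mem_ker, map_pow])
  exact ⟨x, IsOfFinOrder.of_pow hxn hn.ne', rfl⟩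

end CommGroup

namespace AddSubgroup

lemma card_eq_card_ker_mul_card_map_of_ker_le {G H : Type*} [AddGroup G] [AddGroup H]
    {f : G →+ H} {K : AddSubgroup G} (hK : f.ker ≤ K) :
    Nat.card K = Nat.card f.ker * Nat.card (K.map f) := by
  rw [← relIndex_ker, ← card_mul_index (f.ker.addSubgroupOf K),
    Nat.card_congr (addSubgroupOfEquivOfLe hK).toEquiv, relIndex]

end AddSubgroup

theorem stmt1_general (A B C : Type) [AddCommGroup A] [AddCommGroup B] [AddCommGroup C]
    [Finite A]
    (i : A →+ B) (j : B →+ C)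
    (hi : Function.Injective i) (hj : Function.Surjective j)
    (hexact : Function.Exact i j) :
    Nat.card (AddCommGroup.torsion B) =
      Nat.card A * Nat.card (AddCommGroup.torsion C) := by
  have hker : j.ker = i.range := AddMonoidHom.exact_iff.1 hexact
  have hker_le : j.ker ≤ AddCommGroup.torsion B :=
    hker ▸ AddCommGroup.range_le_torsion_of_finite i
  rw [AddSubgroup.card_eq_card_ker_mul_card_map_of_ker_le hker_le,
    AddCommGroup.map_torsion_of_surjective hj hker_le, hker,
    Nat.card_congr (AddMonoidHom.ofInjective hi).toEquiv]

/-- For a short exact sequence `0 → A → B → C → 0` of finitely generated abelian groups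
with `A` finite, `|tor B| = |A| · |tor C|`. -/
theorem stmt1 (A B C : Type) [AddCommGroup A] [AddCommGroup B] [AddCommGroup C]
    [AddGroup.FG A] [AddGroup.FG B] [AddGroup.FG C] [Finite A]
    (i : A →+ B) (j : B →+ C)
    (hi : Function.Injective i) (hj : Function.Surjective j)
    (hexact : Function.Exact i j) :
    Nat.card (AddCommGroup.torsion B) =
      Nat.card A * Nat.card (AddCommGroup.torsion C) :=
  stmt1_general A B C i j hi hj hexact
end

section
/- If 0 → A → B → C → 0 is a short exact sequence of finitely generated abelian groups with A and B both free abelian, then log|tor C| ≤ rk(A) · log e(C), where e(C) is the exponent of the torsion subgroup of C (the maximal order of a torsion element). -/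
/-!
Let `T = tor C` with exponent `e`, and let `P = j⁻¹(T) ≤ B`, a free abelian group of finite
rank. Since `e` kills `T`, exactness gives `e • P ⊆ i(A)`, and multiplication by `e` is
injective on the free abelian group `B`, so `rk P ≤ rk A`. On the other hand `j` maps `P` onto
`T` and factors through `P / eP`, which has `e ^ rk P` elements. Hence `|T| ≤ e ^ rk A`.
-/

open Module

theorem AddCommGroup.finite_torsion (G : Type*) [AddCommGroup G] [AddGroup.FG G] :
    Finite (torsion G) := by
  have : Module.Finite ℤ G := Module.Finite.iff_addGroup_fg.mpr ‹_›
  have : AddGroup.FG (torsion G) := Module.Finite.iff_addGroup_fg.mp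
    (inferInstanceAs (Module.Finite ℤ (torsion G).toIntSubmodule))
  exact finite_of_fg_isAddTorsion _ AddCommMonoid.addTorsion.isAddTorsion

theorem Nat.card_le_pow_finrank_of_surjective {G T : Type*} [AddCommGroup G] [Free ℤ G]
    [Module.Finite ℤ G] [AddCommGroup T] (n : ℕ) [NeZero n] (hn : ∀ t : T, n • t = 0)
    (f : G →+ T) (hf : Function.Surjective f) : Nat.card T ≤ n ^ finrank ℤ G := by
  let f' : ModN G n →+ T := ModN.liftEquiv.symm ⟨f, fun g ↦ hn (f g)⟩
  have hf' : f'.comp (ModN.mkQ n) = f := congrArg Subtype.val (ModN.liftEquiv.apply_symm_apply _)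
  rw [← ModN.natCard_eq]
  refine Nat.card_le_card_of_surjective f' (Function.Surjective.of_comp (g := ModN.mkQ n) ?_)
  rwa [← AddMonoidHom.coe_comp, hf']

theorem Submodule.finrank_le_of_smul_mem_range {R M N : Type*} [CommRing R]
    [StrongRankCondition R] [AddCommGroup M] [Module R M] [AddCommGroup N] [Module R N]
    [Module.Finite R N]
    (P : Submodule R M) (f : N →ₗ[R] M) (hf : Function.Injective f) {r : R}
    (hr : IsSMulRegular M r) (hP : ∀ x ∈ P, r • x ∈ LinearMap.range f) :
    finrank R P ≤ finrank R N := by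
  calc finrank R P = finrank R (P.map (LinearMap.lsmul R M r)) :=
        (P.equivMapOfInjective (LinearMap.lsmul R M r) hr).finrank_eq
    _ ≤ finrank R (LinearMap.range f) :=
        Submodule.finrank_mono (Submodule.map_le_iff_le_comap.mpr hP)
    _ = finrank R N := LinearMap.finrank_range_of_inj hf

theorem stmt2_general (A B C : Type) [AddCommGroup A] [AddCommGroup B] [AddCommGroup C]
    [AddGroup.FG B] [AddGroup.FG C]
    [Module.Free ℤ B]
    (i : A →+ B) (j : B →+ C)
    (hi : Function.Injective i) (hj : Function.Surjective j)
    (hexact : Function.Exact i j) :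
    Real.log (Nat.card (AddCommGroup.torsion C)) ≤
      (Module.finrank ℤ A : ℝ) *
        Real.log (AddMonoid.exponent (AddCommGroup.torsion C)) := by
  set T := AddCommGroup.torsion C
  set e := AddMonoid.exponent T
  have : Module.Finite ℤ B := Module.Finite.iff_addGroup_fg.mpr ‹_›
  have : Module.Finite ℤ A := .of_injective i.toIntLinearMap hi
  have : Finite T := AddCommGroup.finite_torsion C
  have : NeZero e := ⟨AddMonoid.exponent_ne_zero_of_finite⟩
  let P : Submodule ℤ B := (T.comap j).toIntSubmodule
  have : Free ℤ P := Module.free_of_finite_type_torsion_free'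
  let jP : P →+ T := (j.comp P.subtype.toAddMonoidHom).codRestrict T fun x ↦ x.2
  have hjP : Function.Surjective jP := by
    rintro ⟨t, ht⟩
    obtain ⟨b, rfl⟩ := hj t
    exact ⟨⟨b, ht⟩, rfl⟩
  have hcard : Nat.card T ≤ e ^ finrank ℤ P :=
    Nat.card_le_pow_finrank_of_surjective e AddMonoid.exponent_nsmul_eq_zero jP hjP
  have hrank : finrank ℤ P ≤ finrank ℤ A := by
    refine P.finrank_le_of_smul_mem_range i.toIntLinearMap hi
      (IsSMulRegular.of_ne_zero (Int.natCast_ne_zero.mpr (NeZero.ne e))) fun x hx ↦ ?_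
    have : e • (⟨j x, hx⟩ : T) = 0 := AddMonoid.exponent_nsmul_eq_zero _
    exact (hexact _).mp (by simpa using congrArg Subtype.val this)
  have hpos : (0 : ℝ) < Nat.card T := by exact_mod_cast Nat.card_pos
  calc Real.log (Nat.card T) ≤ Real.log ((e : ℝ) ^ finrank ℤ A) := by
        refine Real.log_le_log hpos ?_
        exact_mod_cast hcard.trans (Nat.pow_le_pow_right (NeZero.pos e) hrank)
    _ = finrank ℤ A * Real.log e := Real.log_pow _ _

/-- For a short exact sequence `0 → A → B → C → 0` of finitely generated abelian groups with
`A` and `B` free abelian, `log |tor C| ≤ rk A · log e(C)`, where `e(C)` is the exponent of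
the torsion subgroup of `C`. -/
theorem stmt2 (A B C : Type) [AddCommGroup A] [AddCommGroup B] [AddCommGroup C]
    [AddGroup.FG A] [AddGroup.FG B] [AddGroup.FG C]
    [Module.Free ℤ A] [Module.Free ℤ B]
    (i : A →+ B) (j : B →+ C)
    (hi : Function.Injective i) (hj : Function.Surjective j)
    (hexact : Function.Exact i j) :
    Real.log (Nat.card (AddCommGroup.torsion C)) ≤
      (Module.finrank ℤ A : ℝ) *
        Real.log (AddMonoid.exponent (AddCommGroup.torsion C)) :=
  stmt2_general A B C i j hi hj hexact
end

section
/- If 0 → A → B → C → 0 is a short exact sequence of finitely generated abelian groups, then log|tor B| ≥ log|tor A| + log|tor C| − rk(A) · log e(C), where e(C) is the exponent of the torsion subgroup of C. -/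
/-!
Restricted to torsion, `j` has kernel `i (tor A)`, so `|tor B| = |tor A| · |j (tor B)|`, and it
remains to bound the index of `j (tor B)` in `tor C` by `e ^ rk A`. Lift `c ∈ tor C` to `b ∈ B`
and write `e • b = i a`: the class of `a` in `A ⧸ (tor A + e A)`, a group of order `e ^ rk A`,
determines `c` modulo `j (tor B)`.
-/

open AddCommGroup (torsion)
open Module (finrank)

instance AddCommGroup.finite_torsion_s3 (G : Type*) [AddCommGroup G] [AddGroup.FG G] :
    Finite (torsion G) := by
  have : Finite (Submodule.torsion ℤ G) :=
    Module.finite_of_fg_torsion _ Submodule.torsion_isTorsion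
  rwa [← Submodule.torsion_int]

namespace AddSubgroup

variable {G : Type*} [AddGroup G]

lemma card_mul_relIndex {H K : AddSubgroup G} (h : H ≤ K) :
    Nat.card H * H.relIndex K = Nat.card K := by
  simpa [relIndex_bot_left] using relIndex_mul_relIndex ⊥ H K bot_le h

lemma index_le_card_of_neg_add_mem {X : Type*} [Finite X] (H : AddSubgroup G) (g : G → X)
    (hg : ∀ x y, g x = g y → -x + y ∈ H) : H.index ≤ Nat.card X := by
  rw [index_eq_card]
  refine Nat.card_le_card_of_injective (fun q => g q.out) fun p q hpq => ?_
  rw [← QuotientAddGroup.out_eq' p, ← QuotientAddGroup.out_eq' q]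
  exact QuotientAddGroup.eq.mpr (hg _ _ hpq)

end AddSubgroup

namespace Function.Exact

variable {A B C : Type*} [AddCommGroup A] [AddCommGroup B] [AddCommGroup C]
  {i : A →+ B} {j : B →+ C}

lemma card_torsion_eq_mul_card_map_torsion (hi : Injective i) (hexact : Exact i j) :
    Nat.card (torsion B) = Nat.card (torsion A) * Nat.card ((torsion B).map j) := by
  have hker : j.ker ⊓ torsion B = (torsion A).map i := by
    rw [(hexact.addMonoidHom_ker_eq : j.ker = i.range), ← AddSubgroup.map_comap_eq i,
      AddCommGroup.comap_torsion_of_injective hi]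
  rw [← AddSubgroup.card_mul_relIndex (inf_le_right : j.ker ⊓ torsion B ≤ _),
    AddSubgroup.inf_relIndex_right, AddSubgroup.relIndex_ker, hker,
    AddSubgroup.card_map_of_injective hi]

lemma map_neg_add_mem_map_torsion (hexact : Exact i j) {n : ℕ} (hn : n ≠ 0) {a a' a₀ : A}
    {b b' : B} (hb : i a = n • b) (hb' : i a' = n • b')
    (h : -a + a' - n • a₀ ∈ torsion A) :
    j (-b + b') ∈ (torsion B).map j := by
  refine ⟨-b + b' - i a₀, ?_, by rw [map_sub, hexact.apply_apply_eq_zero, sub_zero]⟩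
  have : n • (-b + b' - i a₀) = i (-a + a' - n • a₀) := by
    simp only [map_sub, map_add, map_neg, map_nsmul, hb, hb', smul_sub, smul_add, smul_neg]
  exact (isOfFinAddOrder_nsmul.mp (this ▸ i.isOfFinAddOrder h)).resolve_right hn

lemma relIndex_map_torsion_le [Module.Finite ℤ A] (hj : Surjective j) (hexact : Exact i j)
    {n : ℕ} (hn : n ≠ 0) (hC : ∀ c ∈ torsion C, n • c = 0) :
    ((torsion B).map j).relIndex (torsion C) ≤ n ^ finrank ℤ A := by
  set T := Submodule.torsion ℤ A
  set N := (nsmulAddMonoidHom (α := A ⧸ T) n).range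
  have hN : N.index = n ^ finrank ℤ A := by
    rw [AddSubgroup.index_range_nsmul, finrank_quotient_eq_of_le_torsion le_rfl]
  have : Finite ((A ⧸ T) ⧸ N) :=
    AddSubgroup.index_ne_zero_iff_finite.mp (hN ▸ pow_ne_zero _ hn)
  have hlift : ∀ c : torsion C, ∃ a b, j b = c ∧ i a = n • b := fun c => by
    obtain ⟨b, hb⟩ := hj c
    obtain ⟨a, ha⟩ := (hexact (n • b)).mp (by rw [map_nsmul, hb]; exact hC _ c.2)
    exact ⟨a, b, hb, ha⟩
  choose a b hb hab using hlift
  rw [AddSubgroup.relIndex, ← hN, AddSubgroup.index_eq_card N]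
  refine AddSubgroup.index_le_card_of_neg_add_mem _ (fun c => (T.mkQ (a c) : (A ⧸ T) ⧸ N))
    fun c c' hcc' => ?_
  obtain ⟨m, hm⟩ := QuotientAddGroup.eq.mp hcc'
  obtain ⟨a₀, rfl⟩ := T.mkQ_surjective m
  have htors : -a c + a c' - n • a₀ ∈ torsion A := by
    rw [← Submodule.torsion_int, Submodule.mem_toAddSubgroup, ← Submodule.Quotient.mk_eq_zero]
    simp only [nsmulAddMonoidHom_apply, Submodule.mkQ_apply] at hm
    simp [← hm]
  rw [AddSubgroup.mem_addSubgroupOf, AddSubgroup.coe_add, AddSubgroup.coe_neg, ← hb, ← hb,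
    ← map_neg, ← map_add]
  exact hexact.map_neg_add_mem_map_torsion hn (hab c) (hab c') htors

lemma card_torsion_mul_card_torsion_le [Module.Finite ℤ A] (hi : Injective i)
    (hj : Surjective j) (hexact : Exact i j) {n : ℕ} (hn : n ≠ 0)
    (hC : ∀ c ∈ torsion C, n • c = 0) :
    Nat.card (torsion A) * Nat.card (torsion C) ≤ n ^ finrank ℤ A * Nat.card (torsion B) := by
  rw [hexact.card_torsion_eq_mul_card_map_torsion hi,
    ← AddSubgroup.card_mul_relIndex (AddCommGroup.map_torsion_le j)]
  rw [← mul_assoc, mul_comm (n ^ _)]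
  exact Nat.mul_le_mul_left _ (hexact.relIndex_map_torsion_le hj hn hC)

end Function.Exact

theorem stmt3_general (A B C : Type) [AddCommGroup A] [AddCommGroup B] [AddCommGroup C]
    [AddGroup.FG A] [AddGroup.FG C]
    (i : A →+ B) (j : B →+ C)
    (hi : Function.Injective i) (hj : Function.Surjective j)
    (hexact : Function.Exact i j) :
    Real.log (Nat.card (AddCommGroup.torsion B)) ≥
      Real.log (Nat.card (AddCommGroup.torsion A)) +
        Real.log (Nat.card (AddCommGroup.torsion C)) -
        (Module.finrank ℤ A : ℝ) *
          Real.log (AddMonoid.exponent (AddCommGroup.torsion C)) := by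
  set e := AddMonoid.exponent (torsion C)
  have hkill : ∀ c ∈ torsion C, e • c = 0 := fun c hc =>
    congrArg Subtype.val (AddMonoid.exponent_nsmul_eq_zero (⟨c, hc⟩ : torsion C))
  have he : e ≠ 0 := AddMonoid.ExponentExists.of_finite.exponent_ne_zero
  have hcard : (Nat.card (torsion A) * Nat.card (torsion C) : ℝ) ≤
      e ^ finrank ℤ A * Nat.card (torsion B) := by
    exact_mod_cast hexact.card_torsion_mul_card_torsion_le hi hj he hkill
  have hA : (0 : ℝ) < Nat.card (torsion A) := by exact_mod_cast Nat.card_pos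
  have hC : (0 : ℝ) < Nat.card (torsion C) := by exact_mod_cast Nat.card_pos
  have hpow : (0 : ℝ) < e ^ finrank ℤ A := pow_pos (by exact_mod_cast he.bot_lt) _
  have hB : (0 : ℝ) < Nat.card (torsion B) :=
    pos_of_mul_pos_right ((mul_pos hA hC).trans_le hcard) hpow.le
  have hlog := Real.log_le_log (mul_pos hA hC) hcard
  rw [Real.log_mul hA.ne' hC.ne', Real.log_mul hpow.ne' hB.ne', Real.log_pow] at hlog
  linarith

/-- For a short exact sequence `0 → A → B → C → 0` of finitely generated abelian groups,
`log |tor B| ≥ log |tor A| + log |tor C| − rk A · log e(C)`. -/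
theorem stmt3 (A B C : Type) [AddCommGroup A] [AddCommGroup B] [AddCommGroup C]
    [AddGroup.FG A] [AddGroup.FG B] [AddGroup.FG C]
    (i : A →+ B) (j : B →+ C)
    (hi : Function.Injective i) (hj : Function.Surjective j)
    (hexact : Function.Exact i j) :
    Real.log (Nat.card (AddCommGroup.torsion B)) ≥
      Real.log (Nat.card (AddCommGroup.torsion A)) +
        Real.log (Nat.card (AddCommGroup.torsion C)) -
        (Module.finrank ℤ A : ℝ) *
          Real.log (AddMonoid.exponent (AddCommGroup.torsion C)) :=
  stmt3_general A B C i j hi hj hexact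
end

section
/- Let f : ℤᵃ → ℤᵇ be a homomorphism of free abelian groups with ‖f‖ ≤ K (operator norm of f ⊗ ℝ, K ≥ 1). Then the torsion subgroup of coker f has order at most K^{min(a,b)}; equivalently log|tor(coker f)| ≤ min(a,b) · log K. -/
/-!
Let `L ⊆ ℤᵇ` be the image of `A` and `r` its rank. Pick `r` rows `t` of `A` spanning its row space
over `ℝ`, then `r` columns `g` such that the minor `B = A[t, g]` is nonsingular. Every row of `A` is
a real combination of the rows `t`, so the restriction `π : ℤᵇ → ℤʳ` to these coordinates is
injective on `L`; as `ℤᵇ` is torsion-free, `π` then induces an injection of the torsion of `ℤᵇ / L`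
into `ℤʳ / π L`. Since `π L ⊇ B ℤʳ`, this gives `|tor(coker A)| ≤ |det B|`. Finally `|det B|` is the
product of the singular values of `B`, each at most `‖B‖ ≤ ‖A‖ ≤ K`, and `r ≤ min(a, b)`.
-/

open Module Submodule
open scoped Matrix.Norms.L2Operator

section Torsion

variable {M N : Type*} [AddCommGroup M] [AddCommGroup N] [IsAddTorsionFree M]
  (L : Submodule ℤ M) (π : M →ₗ[ℤ] N)

theorem Submodule.natCard_torsion_quotient_le (hπ : Disjoint L (LinearMap.ker π))
    [Finite (N ⧸ L.map π)] :
    Nat.card (AddCommGroup.torsion (M ⧸ L)) ≤ Nat.card (N ⧸ L.map π) := by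
  let φ := (L.mapQ (L.map π) π (le_comap_map π L)).toAddMonoidHom.comp
    (AddCommGroup.torsion (M ⧸ L)).subtype
  refine Nat.card_le_card_of_injective φ ((injective_iff_map_eq_zero φ).mpr ?_)
  rintro ⟨q, hq⟩ hφq
  obtain ⟨y, rfl⟩ := L.mkQ_surjective q
  obtain ⟨n, hn, hnq⟩ := hq.exists_nsmul_eq_zero
  have hny : n • y ∈ L := by simpa [← Quotient.mk_smul] using hnq
  obtain ⟨l, hl, hly⟩ : π y ∈ L.map π := (Quotient.mk_eq_zero _).mp hφq
  have hnyl : n • (y - l) = 0 := by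
    refine hπ.le_bot ⟨?_, ?_⟩
    · simpa [smul_sub] using L.sub_mem hny (L.smul_of_tower_mem n hl)
    · simp [hly]
  have hyl : y = l := sub_eq_zero.mp ((nsmul_right_injective hn.ne').eq_iff.mp (by simpa using hnyl))
  ext
  simpa [hyl] using hl

theorem Submodule.natCard_torsion_quotient_le_of_le (hπ : Disjoint L (LinearMap.ker π))
    {P : Submodule ℤ N} (hP : P ≤ L.map π) [Finite (N ⧸ P)] :
    Nat.card (AddCommGroup.torsion (M ⧸ L)) ≤ Nat.card (N ⧸ P) :=
  have : Finite (N ⧸ L.map π) := Finite.of_surjective _ (factor_surjective hP)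
  (L.natCard_torsion_quotient_le π hπ).trans
    (Nat.card_le_card_of_surjective _ (factor_surjective hP))

end Torsion

namespace LinearMap

theorem singularValues_le_opNorm {𝕜 E F : Type*} [RCLike 𝕜]
    [NormedAddCommGroup E] [InnerProductSpace 𝕜 E] [FiniteDimensional 𝕜 E]
    [NormedAddCommGroup F] [InnerProductSpace 𝕜 F] [FiniteDimensional 𝕜 F]
    (T : E →ₗ[𝕜] F) (i : ℕ) : T.singularValues i ≤ ‖toContinuousLinearMap T‖ := by
  rcases lt_or_ge i (finrank 𝕜 E) with hi | hi
  swap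
  · rw [T.singularValues_of_finrank_le hi]
    positivity
  obtain ⟨v, hv⟩ := (T.hasEigenvalue_adjoint_comp_self_sq_singularValues hi).exists_hasEigenvector
  have hTv : ‖T v‖ ^ 2 = T.singularValues i ^ 2 * ‖v‖ ^ 2 := by
    have hv' := hv.apply_eq_smul
    rw [comp_apply] at hv'
    rw [@norm_sq_eq_re_inner 𝕜, ← adjoint_inner_right, hv', inner_smul_right,
      inner_self_eq_norm_sq_to_K]
    norm_cast
  have hv0 : 0 < ‖v‖ ^ 2 := by
    have := norm_pos_iff.mpr hv.2
    positivity
  refine le_of_pow_le_pow_left₀ two_ne_zero (norm_nonneg _) ?_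
  rw [← mul_le_mul_iff_left₀ hv0, ← hTv, ← mul_pow]
  exact pow_le_pow_left₀ (norm_nonneg _) ((toContinuousLinearMap T).le_opNorm v) 2

theorem abs_det_le_opNorm_pow {E : Type*} [NormedAddCommGroup E] [InnerProductSpace ℝ E]
    [FiniteDimensional ℝ E] (T : E →ₗ[ℝ] E) :
    |T.det| ≤ ‖toContinuousLinearMap T‖ ^ finrank ℝ E := by
  rw [← T.normDet_eq_abs_det, T.normDet_eq_prod_singularValues]
  calc ∏ i ∈ Finset.range (finrank ℝ E), T.singularValues i
      ≤ ∏ _ ∈ Finset.range (finrank ℝ E), ‖toContinuousLinearMap T‖ :=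
        Finset.prod_le_prod (fun i _ ↦ T.singularValues_nonneg i)
          fun i _ ↦ T.singularValues_le_opNorm i
    _ = ‖toContinuousLinearMap T‖ ^ finrank ℝ E := by rw [Finset.prod_const, Finset.card_range]

end LinearMap

namespace Matrix

section L2OpNorm

variable {𝕜 : Type*} [RCLike 𝕜] {l m n o : Type*} [Fintype l] [Fintype m] [Fintype n] [Fintype o]
  [DecidableEq l] [DecidableEq m] [DecidableEq n] [DecidableEq o]

theorem l2_opNorm_one_le : ‖(1 : Matrix n n 𝕜)‖ ≤ 1 := by
  rw [← diagonal_one, l2_opNorm_diagonal]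
  exact (pi_norm_const_le (1 : 𝕜)).trans norm_one.le

theorem l2_opNorm_one_submatrix_le {g : o → n} (hg : Function.Injective g) :
    ‖(1 : Matrix n n 𝕜).submatrix id g‖ ≤ 1 := by
  have hQ : ((1 : Matrix n n 𝕜).submatrix id g)ᴴ * (1 : Matrix n n 𝕜).submatrix id g = 1 := by
    rw [conjTranspose_submatrix, conjTranspose_one, ← submatrix_mul _ _ _ _ _ Function.bijective_id,
      one_mul, submatrix_one _ hg]
  have hnorm := l2_opNorm_conjTranspose_mul_self ((1 : Matrix n n 𝕜).submatrix id g)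
  rw [hQ] at hnorm
  nlinarith [l2_opNorm_one_le (n := o) (𝕜 := 𝕜), norm_nonneg ((1 : Matrix n n 𝕜).submatrix id g)]

theorem l2_opNorm_submatrix_le (M : Matrix m n 𝕜) {t : l → m} {g : o → n}
    (ht : Function.Injective t) (hg : Function.Injective g) : ‖M.submatrix t g‖ ≤ ‖M‖ := by
  have hM : M.submatrix t g =
      ((1 : Matrix m m 𝕜).submatrix id t)ᴴ * M * (1 : Matrix n n 𝕜).submatrix id g := by
    have hrows := one_submatrix_mul t (Equiv.refl m) M
    have hcols := mul_submatrix_one (Equiv.refl n) g (M.submatrix t id)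
    simp only [Equiv.coe_refl, Equiv.refl_symm, Function.id_comp] at hrows hcols
    rw [conjTranspose_submatrix, conjTranspose_one, hrows, hcols, submatrix_submatrix]
    rfl
  calc ‖M.submatrix t g‖
      ≤ ‖((1 : Matrix m m 𝕜).submatrix id t)ᴴ‖ * ‖M‖ * ‖(1 : Matrix n n 𝕜).submatrix id g‖ := by
        rw [hM]
        exact (l2_opNorm_mul _ _).trans (by gcongr; exact l2_opNorm_mul _ _)
    _ ≤ 1 * ‖M‖ * 1 := by
        rw [l2_opNorm_conjTranspose]
        gcongr
        exacts [l2_opNorm_one_submatrix_le ht, l2_opNorm_one_submatrix_le hg]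
    _ = ‖M‖ := by ring

theorem abs_det_le_l2_opNorm_pow (M : Matrix n n ℝ) : |M.det| ≤ ‖M‖ ^ Fintype.card n := by
  have h := (toEuclideanLin M).abs_det_le_opNorm_pow
  rwa [toEuclideanLin_eq_toLin_orthonormal, LinearMap.det_toLin, finrank_euclideanSpace] at h

end L2OpNorm

theorem exists_linearIndependent_rows_span_eq {K m n : Type*} [Field K] [Finite m]
    (A : Matrix m n K) :
    ∃ (r : ℕ) (t : Fin r → m), Function.Injective t ∧ LinearIndependent K (A.submatrix t id).row ∧
      span K (Set.range (A.submatrix t id).row) = span K (Set.range A.row) := by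
  obtain ⟨κ, t, ht, hspan, hli⟩ := exists_linearIndependent' K A.row
  have : Finite κ := Finite.of_injective t ht
  let e := (Finite.equivFin κ).symm
  refine ⟨Nat.card κ, t ∘ e, ht.comp e.injective, hli.comp e e.injective, ?_⟩
  rw [← hspan, ← e.surjective.range_comp]
  rfl

theorem exists_submatrix_det_ne_zero {K m n : Type*} [Field K] [Fintype m] [Fintype n]
    (A : Matrix m n K) :
    ∃ (r : ℕ) (t : Fin r → m) (g : Fin r → n), Function.Injective t ∧ Function.Injective g ∧
      (A.submatrix t g).det ≠ 0 ∧
      span K (Set.range (A.submatrix t id).row) = span K (Set.range A.row) := by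
  obtain ⟨r, t, ht, hrows, hspan⟩ := A.exists_linearIndependent_rows_span_eq
  obtain ⟨r', g, hg, hcols, hspan'⟩ := (A.submatrix t id)ᵀ.exists_linearIndependent_rows_span_eq
  have hr : r' = r := by
    have h := hcols.rank_matrix
    rwa [rank_eq_finrank_span_row, hspan', ← rank_eq_finrank_span_row, rank_transpose,
      hrows.rank_matrix, Fintype.card_fin, Fintype.card_fin, eq_comm] at h
  subst hr
  refine ⟨r', t, g, ht, hg, ?_, hspan⟩
  rw [← det_transpose]
  exact ((isUnit_iff_isUnit_det _).mp (linearIndependent_rows_iff_isUnit.mp hcols)).ne_zero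

theorem mulVec_eq_zero_of_span_rows_eq {K l m n : Type*} [Field K] [Fintype n] (A : Matrix m n K)
    {t : l → m} (ht : span K (Set.range (A.submatrix t id).row) = span K (Set.range A.row))
    {x : n → K} (hx : ∀ k, (A *ᵥ x) (t k) = 0) : A *ᵥ x = 0 := by
  have hle : span K (Set.range (A.submatrix t id).row) ≤
      LinearMap.ker ((dotProductBilin K K).flip x) := by
    rw [span_le]
    rintro _ ⟨k, rfl⟩
    exact hx k
  ext i
  exact hle (ht ▸ subset_span ⟨i, rfl⟩)

theorem disjoint_range_toLin'_ker_funLeft {R K l m n : Type*} [CommRing R] [Field K] [Fintype n]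
    [DecidableEq n] {f : R →+* K} (hf : Function.Injective f) (A : Matrix m n R) {t : l → m}
    (ht : span K (Set.range ((A.map f).submatrix t id).row) = span K (Set.range (A.map f).row)) :
    Disjoint (LinearMap.range A.toLin') (LinearMap.ker (LinearMap.funLeft R R t)) := by
  rw [disjoint_iff_inf_le]
  rintro _ ⟨⟨u, rfl⟩, hu⟩
  have hAu := (A.map f).mulVec_eq_zero_of_span_rows_eq ht (x := f ∘ u) fun k ↦ by
    simpa [← RingHom.map_mulVec] using congrArg f (congrFun hu k)
  ext i
  simpa [← RingHom.map_mulVec, map_eq_zero_iff f hf] using congrFun hAu i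

theorem range_toLin'_submatrix_le {R l m n o : Type*} [CommRing R] [Fintype n] [Fintype o]
    [DecidableEq n] [DecidableEq o] (A : Matrix m n R) (t : l → m) (g : o → n) :
    LinearMap.range (A.submatrix t g).toLin' ≤
      (LinearMap.range A.toLin').map (LinearMap.funLeft R R t) := by
  rintro _ ⟨u, rfl⟩
  refine ⟨_, ⟨(1 : Matrix n n R).submatrix id g *ᵥ u, rfl⟩, ?_⟩
  have hcols := mul_submatrix_one (Equiv.refl n) g A
  simp only [Equiv.coe_refl, Equiv.refl_symm, Function.id_comp] at hcols
  ext k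
  simp only [LinearMap.funLeft_apply, toLin'_apply, mulVec_mulVec, hcols]
  rfl

theorem natCard_quotient_range_toLin' {n : Type*} [Fintype n] [DecidableEq n]
    (B : Matrix n n ℤ) (hB : B.det ≠ 0) :
    Nat.card ((n → ℤ) ⧸ LinearMap.range B.toLin') = B.det.natAbs := by
  rw [← natAbs_det_equiv _ (LinearEquiv.ofInjective _ (B.mulVec_injective_of_det_ne_zero hB)),
    ← LinearMap.det_toLin' B]
  rfl

end Matrix

/-- If `f : ℤᵃ → ℤᵇ` has Euclidean operator norm at most `K` (with `K ≥ 1`), then the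
torsion subgroup of `coker f` has order at most `K^{min(a,b)}`. -/
theorem stmt11 (a b : ℕ) (A : Matrix (Fin b) (Fin a) ℤ) (K : ℝ) (hK : 1 ≤ K)
    (hnorm : ‖LinearMap.toContinuousLinearMap
        (Matrix.toEuclideanLin (A.map (Int.cast : ℤ → ℝ)))‖ ≤ K) :
    (Nat.card (AddCommGroup.torsion ((Fin b → ℤ) ⧸ LinearMap.range (Matrix.toLin' A))) : ℝ) ≤
      K ^ (min a b) := by
  obtain ⟨r, t, g, ht, hg, hdet, hspan⟩ := (A.map (Int.cast : ℤ → ℝ)).exists_submatrix_det_ne_zero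
  set B := A.submatrix t g
  have hBdet : (B.map (Int.cast : ℤ → ℝ)).det = B.det := (Int.cast_det B).symm
  have hB : B.det ≠ 0 := by exact_mod_cast hBdet ▸ hdet
  have hcardB := B.natCard_quotient_range_toLin' hB
  have : Finite ((Fin r → ℤ) ⧸ LinearMap.range B.toLin') :=
    Nat.finite_of_card_ne_zero (by rw [hcardB]; exact Int.natAbs_ne_zero.mpr hB)
  have htors := (LinearMap.range A.toLin').natCard_torsion_quotient_le_of_le _
    (A.disjoint_range_toLin'_ker_funLeft (f := Int.castRingHom ℝ) Int.cast_injective hspan)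
    (A.range_toLin'_submatrix_le t g)
  have hr : r ≤ min a b := le_min (by simpa using Fintype.card_le_of_injective g hg)
    (by simpa using Fintype.card_le_of_injective t ht)
  have hA : ‖A.map (Int.cast : ℤ → ℝ)‖ ≤ K := hnorm
  calc (Nat.card (AddCommGroup.torsion ((Fin b → ℤ) ⧸ LinearMap.range A.toLin')) : ℝ)
      ≤ B.det.natAbs := by exact_mod_cast hcardB ▸ htors
    _ = |(B.map (Int.cast : ℤ → ℝ)).det| := by rw [hBdet, Nat.cast_natAbs, Int.cast_abs]
    _ ≤ ‖B.map (Int.cast : ℤ → ℝ)‖ ^ r := by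
        simpa using (B.map (Int.cast : ℤ → ℝ)).abs_det_le_l2_opNorm_pow
    _ ≤ ‖A.map (Int.cast : ℤ → ℝ)‖ ^ r := by
        gcongr
        exact (A.map (Int.cast : ℤ → ℝ)).l2_opNorm_submatrix_le ht hg
    _ ≤ K ^ r := by gcongr
    _ ≤ K ^ min a b := pow_le_pow_right₀ hK hr
end

section
/- Minkowski sum of polytopes up to translation is a cancellative commutative monoid: if P, Q, R are convex polytopes in a finite-dimensional real vector space and P + Q is a translate of P + R, then Q is a translate of R. -/
/-!
The support function `f ↦ sSup (f '' A)` of a nonempty compact set is additive under Minkowski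
sum, so `S + T = S + U` forces `T` and `U` to have the same support function; by Hahn–Banach
separation a compact convex set is the intersection of its supporting half-spaces, hence
`T = U`. A translate `v +ᵥ (S + U)` is `S + (v +ᵥ U)`, and a finite-dimensional space carries a
locally convex Hausdorff topology in which polytopes are compact.
-/

open Pointwise

section LocallyConvex

variable {E : Type*} [AddCommGroup E] [Module ℝ E] [TopologicalSpace E]

theorem sSup_image_add_of_isCompact (f : StrongDual ℝ E) {A B : Set E} (hA : IsCompact A)
    (hB : IsCompact B) (hAne : A.Nonempty) (hBne : B.Nonempty) :
    sSup (f '' (A + B)) = sSup (f '' A) + sSup (f '' B) := by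
  rw [Set.image_add, csSup_add (hAne.image f) (hA.image f.continuous).bddAbove
    (hBne.image f) (hB.image f.continuous).bddAbove]

variable [IsTopologicalAddGroup E] [ContinuousSMul ℝ E] [LocallyConvexSpace ℝ E] [T2Space E]

theorem subset_of_forall_sSup_image_le {A B : Set E} (hA : IsCompact A) (hB : IsCompact B)
    (hBc : Convex ℝ B) (hBne : B.Nonempty)
    (h : ∀ f : StrongDual ℝ E, sSup (f '' A) ≤ sSup (f '' B)) : A ⊆ B := by
  intro x hx
  by_contra hxB
  obtain ⟨f, c, hfB, hfx⟩ := geometric_hahn_banach_closed_point hBc hB.isClosed hxB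
  have hsupB : sSup (f '' B) ≤ c :=
    csSup_le (hBne.image f) (Set.forall_mem_image.2 fun b hb => (hfB b hb).le)
  have hsupA : f x ≤ sSup (f '' A) := le_csSup (hA.image f.continuous).bddAbove ⟨x, hx, rfl⟩
  linarith [h f]

theorem eq_of_forall_sSup_image_eq {A B : Set E} (hA : IsCompact A) (hB : IsCompact B)
    (hAc : Convex ℝ A) (hBc : Convex ℝ B) (hAne : A.Nonempty) (hBne : B.Nonempty)
    (h : ∀ f : StrongDual ℝ E, sSup (f '' A) = sSup (f '' B)) : A = B :=
  (subset_of_forall_sSup_image_le hA hB hBc hBne fun f => (h f).le).antisymm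
    (subset_of_forall_sSup_image_le hB hA hAc hAne fun f => (h f).ge)

theorem add_left_cancel_of_isCompact_of_convex {S T U : Set E} (hS : IsCompact S)
    (hT : IsCompact T) (hU : IsCompact U) (hTc : Convex ℝ T) (hUc : Convex ℝ U)
    (hSne : S.Nonempty) (hTne : T.Nonempty) (hUne : U.Nonempty) (h : S + T = S + U) : T = U := by
  refine eq_of_forall_sSup_image_eq hT hU hTc hUc hTne hUne fun f => ?_
  have hf := congrArg (fun X => sSup (f '' X)) h
  simp only [sSup_image_add_of_isCompact f hS hT hSne hTne,
    sSup_image_add_of_isCompact f hS hU hSne hUne] at hf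
  exact add_left_cancel hf

theorem convexHull_add_left_cancel {s t u : Finset E} (hs : s.Nonempty) (ht : t.Nonempty)
    (hu : u.Nonempty)
    (h : convexHull ℝ (s : Set E) + convexHull ℝ (t : Set E) =
      convexHull ℝ (s : Set E) + convexHull ℝ (u : Set E)) :
    convexHull ℝ (t : Set E) = convexHull ℝ (u : Set E) :=
  add_left_cancel_of_isCompact_of_convex (s.finite_toSet.isCompact_convexHull ℝ)
    (t.finite_toSet.isCompact_convexHull ℝ) (u.finite_toSet.isCompact_convexHull ℝ)
    (convex_convexHull ℝ _) (convex_convexHull ℝ _) (convexHull_nonempty_iff.2 hs.to_set)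
    (convexHull_nonempty_iff.2 ht.to_set) (convexHull_nonempty_iff.2 hu.to_set) h

end LocallyConvex

/-- Minkowski sum of polytopes up to translation is cancellative: if `P + Q` is a translate
of `P + R` for polytopes `P`, `Q`, `R` in a finite-dimensional real vector space, then `Q`
is a translate of `R`. -/
theorem stmt18 (V : Type) [AddCommGroup V] [Module ℝ V] [FiniteDimensional ℝ V]
    (s t u : Finset V) (hs : s.Nonempty) (ht : t.Nonempty) (hu : u.Nonempty)
    (v : V)
    (h : convexHull ℝ (s : Set V) + convexHull ℝ (t : Set V) =
      v +ᵥ (convexHull ℝ (s : Set V) + convexHull ℝ (u : Set V))) :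
    ∃ w : V, convexHull ℝ (t : Set V) = w +ᵥ convexHull ℝ (u : Set V) := by
  classical
  let e := (Module.finBasis ℝ V).equivFun
  -- the claim is topology-free, so any norm will do
  let _ : NormedAddCommGroup V := .induced V _ e e.injective
  let _ : NormedSpace ℝ V := .induced ℝ V _ e
  refine ⟨v, ?_⟩
  rw [← add_vadd_comm, ← convexHull_vadd, ← Finset.coe_vadd_finset] at h
  rw [← convexHull_vadd, ← Finset.coe_vadd_finset]
  exact convexHull_add_left_cancel hs ht hu.vadd_finset h
end
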